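/- Let η be a shift-invariant probability measure on Σ^k, and let ω = a_0 a_1 ⋯ a_{n−1} ∈ Σ^n with n ≥ k satisfy fr_ω^k = η. Then the (k−1)-prefix of ω equals its (k−1)-suffix: a_0 ⋯ a_{k−2} = a_{n−k+1} ⋯ a_{n−1}. -/

import Mathlib

open Finset

def occCount {A : Type*} [DecidableEq A] (k : ℕ) (ω : List A) (φ : Fin k → A) : ℕ :=
  ((Finset.range (ω.length - k + 1)).filter
    (fun i => ∀ j : Fin k, ω[i + (j : ℕ)]? = some (φ j))).card

noncomputable def freq {A : Type*} [DecidableEq A] (k : ℕ) (ω : List A) (φ : Fin k → A) : ℝ :=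
  (occCount k ω φ : ℝ) / ((ω.length - k + 1 : ℕ) : ℝ)

def IsProbVec {A : Type*} [Fintype A] {k : ℕ} (η : (Fin k → A) → ℝ) : Prop :=
  (∀ φ, 0 ≤ η φ) ∧ ∑ φ : Fin k → A, η φ = 1

def ShiftInv {A : Type*} [Fintype A] (k : ℕ) (η : (Fin (k + 2) → A) → ℝ) : Prop :=
  ∀ ψ : Fin (k + 1) → A, ∑ a : A, η (Fin.cons a ψ) = ∑ a : A, η (Fin.snoc ψ a)

def genFrom {A V : Type*} (E : V → V → A → Prop) (ω : List A) : Prop :=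
  ∃ f : Fin (ω.length + 1) → V, ∀ i : Fin ω.length, E (f i.castSucc) (f i.succ) (ω.get i)

noncomputable def capacity {A : Type*} (T : Set (List A)) : ℝ :=
  Filter.atTop.limsup fun n : ℕ =>
    Real.logb 2 (Nat.card {ω : List A // ω ∈ T ∧ ω.length = n}) / n

def memGammaEps {A : Type*} [Fintype A] [DecidableEq A] {k : ℕ}
    (Γ : Set ((Fin k → A) → ℝ)) (ε : ℝ) (η : (Fin k → A) → ℝ) : Prop :=
  IsProbVec η ∧ ∃ δ, ε < δ ∧ ∀ μ : (Fin k → A) → ℝ, IsProbVec μ → μ ∉ Γ → δ ≤ ‖η - μ‖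

/-
Every occurrence of a word ψ of length k + 1 in ω, except one at position 0, extends uniquely
to the left to an occurrence of a word a ψ of length k + 2, and every occurrence except one at
the last position extends uniquely to the right to one of ψ a. Counting occurrences of ψ both
ways gives Σₐ #(a ψ) + [ψ at 0] = Σₐ #(ψ a) + [ψ at the end]. Shift invariance of the
(k + 2)-frequencies says that the two sums agree, so ψ occurs at the start iff it occurs at the
end; taking for ψ the prefix of ω gives the claim.
-/
def OccursAt {A : Type*} {k : ℕ} (ω : List A) (ψ : Fin k → A) (i : ℕ) : Prop :=
  ∀ j : Fin k, ω[i + (j : ℕ)]? = some (ψ j)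

instance {A : Type*} [DecidableEq A] {k : ℕ} (ω : List A) (ψ : Fin k → A) :
    DecidablePred (OccursAt ω ψ) :=
  fun _ => inferInstanceAs (Decidable (∀ _ : Fin k, _))

section Occurrences

variable {A : Type*} {k : ℕ} (ω : List A)

theorem occCount_eq_card_filter [DecidableEq A] (ψ : Fin k → A) :
    occCount k ω ψ = #{i ∈ range (ω.length - k + 1) | OccursAt ω ψ i} := rfl

theorem occursAt_cons_iff (a : A) (ψ : Fin k → A) (i : ℕ) :
    OccursAt ω (Fin.cons a ψ : Fin (k + 1) → A) i ↔ ω[i]? = some a ∧ OccursAt ω ψ (i + 1) := by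
  simp only [OccursAt, Fin.forall_fin_succ, Fin.cons_zero, Fin.cons_succ, Fin.val_zero,
    Fin.val_succ, add_zero, add_assoc, add_comm 1]

theorem occursAt_snoc_iff (ψ : Fin k → A) (a : A) (i : ℕ) :
    OccursAt ω (Fin.snoc ψ a : Fin (k + 1) → A) i ↔ OccursAt ω ψ i ∧ ω[i + k]? = some a := by
  simp only [OccursAt, Fin.forall_fin_succ', Fin.snoc_castSucc, Fin.snoc_last, Fin.val_castSucc,
    Fin.val_last]

theorem occursAt_iff_take_drop (ψ : Fin k → A) (i : ℕ) :
    OccursAt ω ψ i ↔ (ω.drop i).take k = List.ofFn ψ := by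
  simp only [OccursAt, List.ext_getElem?_iff, List.getElem?_take, List.getElem?_drop,
    List.getElem?_ofFn]
  refine ⟨fun h j => ?_, fun h j => by simpa using h j⟩
  split_ifs with hj
  exacts [h ⟨j, hj⟩, rfl]

theorem sum_card_filter_getElem?_eq_some [Fintype A] [DecidableEq A] (s : Finset ℕ) (f : ℕ → ℕ)
    (hs : ∀ i ∈ s, f i < ω.length) (p : ℕ → Prop) [DecidablePred p] :
    ∑ a : A, #{i ∈ s | ω[f i]? = some a ∧ p i} = #{i ∈ s | p i} := by
  simp only [card_filter]
  rw [sum_comm]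
  refine sum_congr rfl fun i hi => ?_
  by_cases hp : p i <;> simp [List.getElem?_eq_getElem (hs i hi), hp]

theorem occCount_eq_ite_add_sum_occCount_cons [Fintype A] [DecidableEq A]
    (hk : k < ω.length) (ψ : Fin k → A) :
    occCount k ω ψ =
      (if OccursAt ω ψ 0 then 1 else 0) + ∑ a : A, occCount (k + 1) ω (Fin.cons a ψ) := by
  simp_rw [occCount_eq_card_filter, occursAt_cons_iff]
  rw [sum_card_filter_getElem?_eq_some ω _ (fun i => i) (fun i hi => by simp at hi; omega),
    card_filter, card_filter, show ω.length - k + 1 = ω.length - (k + 1) + 1 + 1 by omega,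
    sum_range_succ', add_comm]

theorem occCount_eq_sum_occCount_snoc_add_ite [Fintype A] [DecidableEq A]
    (hk : k < ω.length) (ψ : Fin k → A) :
    occCount k ω ψ =
      ∑ a : A, occCount (k + 1) ω (Fin.snoc ψ a) +
        if OccursAt ω ψ (ω.length - k) then 1 else 0 := by
  simp_rw [occCount_eq_card_filter, occursAt_snoc_iff, and_comm (a := OccursAt ω ψ _)]
  rw [sum_card_filter_getElem?_eq_some ω _ (fun i => i + k) (fun i hi => by simp at hi; omega),
    card_filter, card_filter, show ω.length - k + 1 = ω.length - (k + 1) + 1 + 1 by omega,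
    sum_range_succ, show ω.length - (k + 1) + 1 = ω.length - k by omega]

theorem occursAt_zero_iff_occursAt_length_sub [Fintype A] [DecidableEq A]
    (hk : k < ω.length) (ψ : Fin k → A)
    (h : ∑ a : A, occCount (k + 1) ω (Fin.cons a ψ) =
      ∑ a : A, occCount (k + 1) ω (Fin.snoc ψ a)) :
    OccursAt ω ψ 0 ↔ OccursAt ω ψ (ω.length - k) := by
  have hcount := (occCount_eq_ite_add_sum_occCount_cons ω hk ψ).symm.trans
    (occCount_eq_sum_occCount_snoc_add_ite ω hk ψ)
  rw [h] at hcount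
  split_ifs at hcount <;> first | omega | tauto

theorem exists_occursAt_zero (hk : k ≤ ω.length) : ∃ ψ : Fin k → A, OccursAt ω ψ 0 :=
  ⟨fun j => ω[(j : ℕ)], fun j => by simp⟩

theorem take_eq_drop_of_occursAt {ψ : Fin k → A} (h₀ : OccursAt ω ψ 0)
    (h₁ : OccursAt ω ψ (ω.length - k)) : ω.take k = ω.drop (ω.length - k) := by
  rw [occursAt_iff_take_drop] at h₀ h₁
  rw [List.drop_zero] at h₀
  rw [h₀, ← h₁, List.take_of_length_le (by simp; omega)]

end Occurrences

theorem sum_occCount_cons_eq_sum_occCount_snoc {A : Type*} [Fintype A] [DecidableEq A] {k : ℕ}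
    {ω : List A} (h : ShiftInv k (freq (k + 2) ω)) (ψ : Fin (k + 1) → A) :
    ∑ a : A, occCount (k + 2) ω (Fin.cons a ψ) = ∑ a : A, occCount (k + 2) ω (Fin.snoc ψ a) := by
  have hψ := h ψ
  simp only [freq, ← sum_div] at hψ
  rw [div_left_inj' (by positivity)] at hψ
  exact_mod_cast hψ

theorem stmt13_general {A : Type*} [Fintype A] [DecidableEq A] (k : ℕ)
    (η : (Fin (k + 2) → A) → ℝ) (hsi : ShiftInv k η)
    (ω : List A) (hlen : k + 2 ≤ ω.length)
    (hfreq : ∀ φ, freq (k + 2) ω φ = η φ) :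
    ω.take (k + 1) = ω.drop (ω.length - (k + 1)) := by
  obtain ⟨ψ, hψ⟩ := exists_occursAt_zero ω (k := k + 1) (by omega)
  have hfreq_si : ShiftInv k (freq (k + 2) ω) := funext hfreq ▸ hsi
  have hψ_end := (occursAt_zero_iff_occursAt_length_sub ω (by omega) ψ
    (sum_occCount_cons_eq_sum_occCount_snoc hfreq_si ψ)).1 hψ
  exact take_eq_drop_of_occursAt ω hψ hψ_end

theorem stmt13 {A : Type*} [Fintype A] [DecidableEq A] (k : ℕ)
    (η : (Fin (k + 2) → A) → ℝ) (hprob : IsProbVec η) (hsi : ShiftInv k η)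
    (ω : List A) (hlen : k + 2 ≤ ω.length)
    (hfreq : ∀ φ, freq (k + 2) ω φ = η φ) :
    ω.take (k + 1) = ω.drop (ω.length - (k + 1)) :=
  stmt13_general k η hsi ω hlen hfreq
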